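/- Let F = (V,E) be a finite multigraph and ℓ : V → [n] a labelling such that each unordered pair {i,j} ⊆ [n] appears an even number of times as the label pair of an edge of F. Then the number of distinct labels |{ℓ(v) : v ∈ V}| is at most |E|/2 + c, where c is the number of connected components of F. -/

import Mathlib

/-!
Collapse `F` along `ℓ` to the simple graph `H` on the used labels in which distinct labels `i, j`
are adjacent when some edge of `F` carries the labels `{i, j}`. A spanning forest of each
component shows `|V(H)| ≤ |E(H)| + c(H)`. Since `ℓ` maps walks of `F` to walks of `H`,
`c(H) ≤ c(F)`. Finally every label pair that occurs is carried by a nonempty, hence by parity at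
least two-element, set of edges of `F`, so `2 |E(H)| ≤ |E|`.
-/

open Finset SimpleGraph

namespace SimpleGraph

variable {V W : Type*}

lemma ConnectedComponent.eq_of_mapEdgeSet_eq {G : SimpleGraph V} {c d : G.ConnectedComponent}
    {e : c.toSimpleGraph.edgeSet} {e' : d.toSimpleGraph.edgeSet}
    (h : (c.toSimpleGraph_hom.mapEdgeSet e : Sym2 V) = d.toSimpleGraph_hom.mapEdgeSet e') :
    c = d := by
  have hx := Sym2.out_fst_mem e.1
  set x := e.1.out.1
  have : (x : V) ∈ (d.toSimpleGraph_hom.mapEdgeSet e' : Sym2 V) :=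
    h ▸ Sym2.mem_map.2 ⟨x, hx, rfl⟩
  obtain ⟨y, -, hy⟩ := Sym2.mem_map.1 this
  rw [← x.2, ← y.2, ← hy, toSimpleGraph_hom_apply]

lemma card_le_card_edgeSet_add_card_connectedComponent [Finite V] (G : SimpleGraph V) :
    Nat.card V ≤ Nat.card G.edgeSet + Nat.card G.ConnectedComponent := by
  have := Fintype.ofFinite V
  let toEdge : (Σ c : G.ConnectedComponent, c.toSimpleGraph.edgeSet) → G.edgeSet :=
    fun x => x.1.toSimpleGraph_hom.mapEdgeSet x.2
  have hinj : Function.Injective toEdge := by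
    rintro ⟨c, e⟩ ⟨d, e'⟩ h
    obtain rfl := ConnectedComponent.eq_of_mapEdgeSet_eq (congrArg Subtype.val h)
    exact Sigma.ext rfl (heq_of_eq (Hom.mapEdgeSet.injective _ Subtype.val_injective h))
  calc Nat.card V = Nat.card (Σ c : G.ConnectedComponent, c.supp) :=
        Nat.card_congr (Equiv.sigmaFiberEquiv G.connectedComponentMk).symm
    _ = ∑ c, Nat.card c.supp := Nat.card_sigma
    _ ≤ ∑ c : G.ConnectedComponent, (Nat.card c.toSimpleGraph.edgeSet + 1) :=
        sum_le_sum fun c _ => c.connected_toSimpleGraph.card_vert_le_card_edgeSet_add_one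
    _ = Nat.card (Σ c : G.ConnectedComponent, c.toSimpleGraph.edgeSet) +
          Nat.card G.ConnectedComponent := by
        rw [sum_add_distrib, Nat.card_sigma]
        simp
    _ ≤ _ := by
        gcongr
        exact Nat.card_le_card_of_injective toEdge hinj

theorem edgeSet_map_subset (f : V → W) (G : SimpleGraph V) :
    (G.map f).edgeSet ⊆ Sym2.map f '' G.edgeSet := by
  rintro ⟨a, b⟩ ⟨-, u, v, huv, rfl, rfl⟩
  exact ⟨s(u, v), huv, rfl⟩

theorem edgeSet_fromRel_subset_range {E : Type*} (ends : E → Sym2 V) :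
    (fromRel fun u v => ∃ e, ends e = s(u, v)).edgeSet ⊆ Set.range ends := by
  rintro ⟨u, v⟩ ⟨-, ⟨e, he⟩ | ⟨e, he⟩⟩
  · exact ⟨e, he⟩
  · exact ⟨e, he.trans Sym2.eq_swap⟩

theorem reachable_map_apply_of_reachable {G : SimpleGraph V} (f : V → W) {u v : V}
    (h : G.Reachable u v) : (G.map f).Reachable (f u) (f v) := by
  obtain ⟨p⟩ := h
  induction p with
  | nil => rfl
  | @cons u w v huw _ ih =>
    refine Reachable.trans ?_ ih
    by_cases hf : f u = f w
    · rw [hf]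
    · exact (map_adj_apply' huw hf).reachable

theorem card_connectedComponent_map_le [Finite V] {f : V → W} (hf : Function.Surjective f)
    (G : SimpleGraph V) :
    Nat.card (G.map f).ConnectedComponent ≤ Nat.card G.ConnectedComponent := by
  refine Nat.card_le_card_of_surjective
    (ConnectedComponent.lift (fun v => (G.map f).connectedComponentMk (f v))
      fun u v p _ => ConnectedComponent.sound (reachable_map_apply_of_reachable f p.reachable)) ?_
  rintro ⟨w⟩
  obtain ⟨v, rfl⟩ := hf w
  exact ⟨G.connectedComponentMk v, rfl⟩

end SimpleGraph

theorem Finset.two_mul_card_image_le_card_of_even_fiber {α β : Type*} [Fintype α]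
    [DecidableEq β] {g : α → β} (hg : ∀ b, Even #{a | g a = b}) :
    2 * #(univ.image g) ≤ Fintype.card α := by
  refine mul_card_image_le_card univ 2 fun b hb => ?_
  obtain ⟨a, -, rfl⟩ := mem_image.1 hb
  have hpos : 0 < #{x | g x = g a} := card_pos.2 ⟨a, by simp⟩
  obtain ⟨m, hm⟩ := hg (g a)
  omega

theorem stmt_2_general (V E : Type) [Fintype V] [Fintype E]
    (ends : E → Sym2 V) (n : ℕ) (ℓ : V → Fin n)
    (heven : ∀ p : Sym2 (Fin n),
      Even ((Finset.univ.filter (fun e : E => Sym2.map ℓ (ends e) = p)).card)) :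
    ((Finset.univ.image ℓ).card : ℝ) ≤ (Fintype.card E : ℝ) / 2 +
      (Nat.card (SimpleGraph.fromRel (fun u v : V => ∃ e, ends e = s(u, v))).ConnectedComponent : ℝ) := by
  set G := fromRel fun u v : V => ∃ e, ends e = s(u, v)
  let f : V → univ.image ℓ := fun v => ⟨ℓ v, mem_image_of_mem ℓ (mem_univ v)⟩
  have hf : Function.Surjective f := by
    rintro ⟨_, hx⟩
    obtain ⟨v, -, rfl⟩ := mem_image.1 hx
    exact ⟨v, rfl⟩
  have hfiber : ∀ q, Even #{e | (ends e).map f = q} := fun q => by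
    convert heven (q.map Subtype.val) using 4 with e
    rw [← (Sym2.map.injective Subtype.val_injective).eq_iff, Sym2.map_map]
    rfl
  have hvert := card_le_card_edgeSet_add_card_connectedComponent (G.map f)
  rw [Nat.card_eq_fintype_card, Fintype.card_coe] at hvert
  have hedge : Nat.card (G.map f).edgeSet ≤ #(univ.image fun e => (ends e).map f) := by
    rw [← Set.ncard_coe_finset, coe_image, coe_univ, Set.image_univ, ← Nat.card_coe_set_eq]
    refine Nat.card_mono (Set.toFinite _) ((edgeSet_map_subset f G).trans ?_)
    rintro _ ⟨_, he, rfl⟩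
    obtain ⟨e, rfl⟩ := edgeSet_fromRel_subset_range ends he
    exact ⟨e, rfl⟩
  have hpairs := two_mul_card_image_le_card_of_even_fiber hfiber
  have hcomp := card_connectedComponent_map_le hf G
  have hcount : 2 * #(univ.image ℓ) ≤ Fintype.card E + 2 * Nat.card G.ConnectedComponent := by
    omega
  have : (2 * #(univ.image ℓ) : ℝ) ≤ Fintype.card E + 2 * Nat.card G.ConnectedComponent := by
    exact_mod_cast hcount
  linarith

/-- A multigraph is given by a finite vertex type `V`, a finite edge type `E`,
and an endpoint map `ends : E → Sym2 V` (parallel edges are allowed). -/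
theorem stmt_2 (V E : Type) [Fintype V] [Fintype E] [DecidableEq V]
    (ends : E → Sym2 V) (n : ℕ) (ℓ : V → Fin n)
    (heven : ∀ p : Sym2 (Fin n),
      Even ((Finset.univ.filter (fun e : E => Sym2.map ℓ (ends e) = p)).card)) :
    ((Finset.univ.image ℓ).card : ℝ) ≤ (Fintype.card E : ℝ) / 2 +
      (Nat.card (SimpleGraph.fromRel (fun u v : V => ∃ e, ends e = s(u, v))).ConnectedComponent : ℝ) :=
  stmt_2_general V E ends n ℓ heven
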